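/- Let k ≥ 2 and let H be a self k-resolved connected graph of order n2. Then for any n1 ≥ 2, dim(K_{n1} ⊠ H) ≤ (n1 − 1)·n2. -/

import Mathlib

/-!
The set of all vertices outside one copy `{i₀} × H` of `H` resolves `K_{n₁} ⊠ H`, and it has
`(n₁ - 1) · n₂` elements. Distances in the strong product are maxima of the coordinate
distances, and in `K_{n₁}` these are at most `1`. Two vertices with the same `H`-coordinate are
resolved by whichever of them lies outside the copy. For `(a, b)` and `(c, d)` with `b ≠ d`,
self `k`-resolvedness gives `w` with, say, `d_H(d, w) ≥ k ≥ 2` and `b` on a shortest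
`d`–`w` path. Then `d_H(b, w) < d_H(d, w)`, and since `d_H(d, w) ≥ 2` the first coordinate,
which contributes at most `1`, cannot hide this: the vertex `(i₁, w)` with `i₁ ≠ i₀` resolves
the pair.
-/

open SimpleGraph

/-- The strong product of two simple graphs. -/
def strongProd {α β : Type*} (G : SimpleGraph α) (H : SimpleGraph β) :
    SimpleGraph (α × β) where
  Adj x y := x ≠ y ∧ (x.1 = y.1 ∨ G.Adj x.1 y.1) ∧ (x.2 = y.2 ∨ H.Adj x.2 y.2)
  symm := by
    constructor
    rintro ⟨a, b⟩ ⟨c, d⟩ ⟨hne, h1, h2⟩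
    refine ⟨hne.symm, ?_, ?_⟩
    · rcases h1 with h | h
      · exact Or.inl h.symm
      · exact Or.inr h.symm
    · rcases h2 with h | h
      · exact Or.inl h.symm
      · exact Or.inr h.symm
  loopless := by constructor; rintro ⟨a, b⟩ ⟨hne, -, -⟩; exact hne rfl

/-- A set `S` is a metric generator for `G` if every pair of distinct vertices is
distinguished by some element of `S`. -/
def IsMetricGen {α : Type*} (G : SimpleGraph α) (S : Set α) : Prop :=
  ∀ x y : α, x ≠ y → ∃ s ∈ S, G.dist x s ≠ G.dist y s

/-- The metric dimension of a graph: minimum cardinality of a metric generator. -/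
noncomputable def metricDim {α : Type*} (G : SimpleGraph α) : ℕ :=
  sInf {n | ∃ S : Set α, IsMetricGen G S ∧ S.ncard = n}

/-- `G` is self `k`-resolved if for all distinct `x, y` there is `w` such that
`d(y,w) ≥ k` and `x` lies on a shortest `y`–`w` path, or symmetrically. -/
def SelfResolved {α : Type*} (G : SimpleGraph α) (k : ℕ) : Prop :=
  ∀ x y : α, x ≠ y → ∃ w : α,
    (k ≤ G.dist y w ∧ G.dist y x + G.dist x w = G.dist y w) ∨
    (k ≤ G.dist x w ∧ G.dist x y + G.dist y w = G.dist x w)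

/-- Two vertices are true twins if their closed neighborhoods coincide. -/
def TrueTwins {α : Type*} (G : SimpleGraph α) (u v : α) : Prop :=
  insert u (G.neighborSet u) = insert v (G.neighborSet v)

/-- The number of equivalence classes of the true twin relation. -/
noncomputable def numTrueTwinClasses {α : Type*} (G : SimpleGraph α) : ℕ :=
  Nat.card (Quotient (Setoid.ker (fun v => insert v (G.neighborSet v))))

section StrongProd

variable {α β : Type*} {G : SimpleGraph α} {H : SimpleGraph β}

def strongProdLeft (b : β) : G →g strongProd G H where
  toFun a := (a, b)
  map_rel' h := ⟨fun e => h.ne (congrArg Prod.fst e), Or.inr h, Or.inl rfl⟩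

def strongProdRight (a : α) : H →g strongProd G H where
  toFun b := (a, b)
  map_rel' h := ⟨fun e => h.ne (congrArg Prod.snd e), Or.inl rfl, Or.inr h⟩

lemma exists_walk_strongProd_length_eq_max {a c : α} {b d : β} (p : G.Walk a c)
    (q : H.Walk b d) :
    ∃ w : (strongProd G H).Walk (a, b) (c, d), w.length = max p.length q.length := by
  induction p generalizing b with
  | nil => exact ⟨q.map (strongProdRight _), (Walk.length_map _ _).trans (by simp)⟩
  | cons hG p ih =>
    cases q with
    | nil => exact ⟨(Walk.cons hG p).map (strongProdLeft _),
      (Walk.length_map _ _).trans (by simp)⟩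
    | cons hH q =>
      obtain ⟨w, hw⟩ := ih q
      exact ⟨.cons ⟨fun e => hG.ne (congrArg Prod.fst e), Or.inr hG, Or.inr hH⟩ w,
        (congrArg (· + 1) hw).trans (max_add_add_right _ _ _).symm⟩

lemma dist_apply_le_length_of_adj {V W : Type*} {G : SimpleGraph V} {G' : SimpleGraph W} (f : V → W)
    (hf : ∀ ⦃u v⦄, G.Adj u v → f u = f v ∨ G'.Adj (f u) (f v)) {u v : V} (w : G.Walk u v) :
    G'.dist (f u) (f v) ≤ w.length := by
  suffices ∃ w' : G'.Walk (f u) (f v), w'.length ≤ w.length from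
    let ⟨w', hw'⟩ := this; (dist_le w').trans hw'
  induction w with
  | nil => exact ⟨.nil, le_rfl⟩
  | cons h p ih =>
    obtain ⟨w', hw'⟩ := ih
    rcases hf h with e | e
    · exact ⟨w'.copy e.symm rfl, by simp; omega⟩
    · exact ⟨.cons e w', by simp; omega⟩

lemma dist_strongProd (hG : G.Connected) (hH : H.Connected) (x y : α × β) :
    (strongProd G H).dist x y = max (G.dist x.1 y.1) (H.dist x.2 y.2) := by
  obtain ⟨p, hp⟩ := (hG.preconnected x.1 y.1).exists_walk_length_eq_dist
  obtain ⟨q, hq⟩ := (hH.preconnected x.2 y.2).exists_walk_length_eq_dist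
  obtain ⟨w, hw⟩ := exists_walk_strongProd_length_eq_max p q
  refine le_antisymm ((dist_le w).trans_eq (by rw [hw, hp, hq])) ?_
  obtain ⟨w', hw'⟩ := w.reachable.exists_walk_length_eq_dist
  rw [← hw']
  exact max_le
    (dist_apply_le_length_of_adj Prod.fst (fun _ _ (h : (strongProd G H).Adj _ _) => h.2.1) w')
    (dist_apply_le_length_of_adj Prod.snd (fun _ _ (h : (strongProd G H).Adj _ _) => h.2.2) w')

end StrongProd

lemma dist_top_le_one {V : Type*} (u v : V) : (⊤ : SimpleGraph V).dist u v ≤ 1 := by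
  classical
  rw [dist_top]
  split_ifs <;> simp

lemma SelfResolved.exists_max_dist_ne {β : Type*} {H : SimpleGraph β} {k : ℕ}
    (hres : SelfResolved H k) (hH : H.Connected) (hk : 2 ≤ k) {b d : β} (hbd : b ≠ d) :
    ∃ w, ∀ e₁ e₂ : ℕ, e₁ ≤ 1 → e₂ ≤ 1 → max e₁ (H.dist b w) ≠ max e₂ (H.dist d w) := by
  obtain ⟨w, hw⟩ := hres b d hbd
  have := hH.pos_dist_of_ne hbd
  have := hH.pos_dist_of_ne hbd.symm
  refine ⟨w, fun e₁ e₂ h₁ h₂ => ?_⟩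
  rcases hw with ⟨_, _⟩ | ⟨_, _⟩ <;> omega

lemma isMetricGen_strongProd_top {α β : Type*} {H : SimpleGraph β} {k : ℕ} {i₀ i₁ : α}
    (h : i₁ ≠ i₀) (hH : H.Connected) (hres : SelfResolved H k) (hk : 2 ≤ k) :
    IsMetricGen (strongProd (⊤ : SimpleGraph α) H) {p | p.1 ≠ i₀} := by
  classical
  have : Nonempty α := ⟨i₀⟩
  have hd := dist_strongProd (connected_top (V := α)) hH
  rintro ⟨a, b⟩ ⟨c, d⟩ hne
  by_cases hbd : b = d
  · subst hbd
    have hac : a ≠ c := fun e => hne (e ▸ rfl)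
    rcases eq_or_ne a i₀ with rfl | ha
    · exact ⟨(c, b), hac.symm, by simp [hd, dist_top, hac]⟩
    · exact ⟨(a, b), ha, by simp [hd, dist_top, hac.symm]⟩
  · obtain ⟨w, hw⟩ := hres.exists_max_dist_ne hH hk hbd
    exact ⟨(i₁, w), h, by
      simpa only [hd] using hw _ _ (dist_top_le_one a i₁) (dist_top_le_one c i₁)⟩

lemma metricDim_le_ncard {α : Type*} {G : SimpleGraph α} {S : Set α} (hS : IsMetricGen G S) :
    metricDim G ≤ S.ncard :=
  Nat.sInf_le ⟨S, hS, rfl⟩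

lemma ncard_setOf_fst_ne {α β : Type*} [Fintype α] [Fintype β] (i₀ : α) :
    {p : α × β | p.1 ≠ i₀}.ncard = (Fintype.card α - 1) * Fintype.card β := by
  have : {p : α × β | p.1 ≠ i₀} = {i₀}ᶜ ×ˢ Set.univ := by ext; simp
  rw [this, Set.ncard_prod, Set.ncard_compl, Set.ncard_singleton, Set.ncard_univ,
    Nat.card_eq_fintype_card, Nat.card_eq_fintype_card]

theorem stmt_6 {β : Type*} [Fintype β] (H : SimpleGraph β) (k n1 : ℕ)
    (hk : 2 ≤ k) (hH : H.Connected) (hres : SelfResolved H k) (hn1 : 2 ≤ n1) :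
    metricDim (strongProd (⊤ : SimpleGraph (Fin n1)) H) ≤ (n1 - 1) * Fintype.card β := by
  have h10 : (⟨1, hn1⟩ : Fin n1) ≠ ⟨0, by omega⟩ := by simp
  calc metricDim (strongProd (⊤ : SimpleGraph (Fin n1)) H)
      _ ≤ {p : Fin n1 × β | p.1 ≠ ⟨0, by omega⟩}.ncard :=
        metricDim_le_ncard (isMetricGen_strongProd_top h10 hH hres hk)
      _ = (n1 - 1) * Fintype.card β := by rw [ncard_setOf_fst_ne, Fintype.card_fin]
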